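/- Refined interior lattice resolvent sum bound (Section 6): For every δ ∈ (0, 1/8] there exists a constant C > 0 such that for every k_F ∈ (0,1] there is L₀ > 0 with: for all L ≥ L₀, (1/L³) ∑_{k ∈ Λ*_L, |k| ≤ k_F − k_F^{3/2}} 1/(k_F² − |k|²) ≤ C k_F^{1/2 + 3δ}. (With ρ := k_F³ this is the bound C ρ^{1/6 + δ} used in the paper.) -/

import Mathlib

/-!
Refined interior lattice resolvent sum bound (Section 6): for every `δ ∈ (0,1/8]`
there is `C > 0` such that for every `k_F ∈ (0,1]` there is `L₀ > 0` with: for all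
`L ≥ L₀`, `(1/L³) ∑_{k ∈ Λ*_L, |k| ≤ k_F − k_F^{3/2}} 1/(k_F² − |k|²)
≤ C k_F^{1/2 + 3δ}`, where `Λ*_L = (2π/L)ℤ³`.
-/

noncomputable section

open Real

abbrev E3 : Type := EuclideanSpace ℝ (Fin 3)

/-- The momentum lattice point `(2π/L)·n` of `Λ*_L`, for `n ∈ ℤ³`. -/
def momVec (L : ℝ) (n : Fin 3 → ℤ) : E3 :=
  ∑ j : Fin 3, (2 * π / L * (n j : ℝ)) • EuclideanSpace.single j (1 : ℝ)

/-- The Euclidean norm `|k|` of the lattice point `(2π/L)·n`. -/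
def knorm (L : ℝ) (n : Fin 3 → ℤ) : ℝ := ‖momVec L n‖

/-!
Write `h = 2π/L`, `R = k_F - k_F^{3/2}` and `g = k_F² - R² ≥ k_F³`. Summing over the lattice
one coordinate at a time, a slice sum of a profile that increases with the squared radius is at
most twice its value at the edge of the ball plus `2/h` times the corresponding integral (a
monotone sum is dominated by its integral). The innermost integral `∫ du / (a² - u²)` contributes
`log (4 k_F² / g) / a`; the middle one, `∫ du / √(A² - u²) = arcsin (S / A) ≤ π / 2`, absorbs
the factor `1 / a`; the outermost slice count is about `2R/h`. Hence `L⁻³` times the sum is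
`O(k_F log (4 / k_F))` as soon as `h ≤ k_F³`, and
`k_F log (4 / k_F) ≤ 8 k_F^{7/8} ≤ 8 k_F^{1/2 + 3δ}` because `δ ≤ 1/8`.
-/

open Finset

theorem sum_le_two_mul_sum_range_of_even {φ : ℤ → ℝ} (M : ℕ) (hφ0 : ∀ z, 0 ≤ φ z)
    (hφ_neg : ∀ z, φ (-z) = φ z) (hφM : ∀ z : ℤ, (M : ℤ) < z → φ z = 0)
    (T : Finset ℤ) :
    ∑ z ∈ T, φ z ≤ 2 * ∑ j ∈ range (M + 1), φ j := by
  have hsupp : ∀ z, φ z ≠ 0 → z.natAbs ≤ M := by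
    intro z hz
    by_contra! hlt
    rcases Int.natAbs_eq z with h | h
    · exact hz (hφM z (by omega))
    · exact hz (by rw [← hφ_neg, hφM (-z) (by omega)])
  let S := range (M + 1) ×ˢ ({1, -1} : Finset ℤ)
  calc ∑ z ∈ T, φ z = ∑ z ∈ T with φ z ≠ 0, φ z := (sum_filter_ne_zero _).symm
    _ ≤ ∑ z ∈ S.image (fun p ↦ p.2 * (p.1 : ℤ)), φ z := by
        refine sum_le_sum_of_subset_of_nonneg (fun z hz ↦ ?_) fun z _ _ ↦ hφ0 z
        have hzM := hsupp z (mem_filter.1 hz).2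
        simp only [S, mem_image, mem_product, mem_range, mem_insert, mem_singleton]
        rcases Int.natAbs_eq z with h | h
        · exact ⟨(z.natAbs, 1), ⟨by omega, by simp⟩, by simp only; linarith⟩
        · exact ⟨(z.natAbs, -1), ⟨by omega, by simp⟩, by simp only; linarith⟩
    _ ≤ ∑ p ∈ S, φ (p.2 * (p.1 : ℤ)) := sum_image_le_of_nonneg fun z _ ↦ hφ0 z
    _ = 2 * ∑ j ∈ range (M + 1), φ j := by
        simp [S, sum_product, hφ_neg, mul_sum, two_mul]

theorem sum_range_le_inv_mul_integral_of_monotoneOn {g : ℝ → ℝ} {h s : ℝ} (hh : 0 < h)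
    {M : ℕ} (hMs : h * M ≤ s) (hg : MonotoneOn g (Set.Icc 0 s)) (hg0 : ∀ u ∈ Set.Icc 0 s, 0 ≤ g u) :
    ∑ j ∈ range M, g (h * j) ≤ h⁻¹ * ∫ u in (0)..s, g u := by
  have hs : 0 ≤ s := le_trans (by positivity) hMs
  have hmono : MonotoneOn (fun v ↦ g (h * v)) (Set.Icc 0 (0 + M)) := by
    intro v hv w hw hvw
    have mem : ∀ x ∈ Set.Icc (0 : ℝ) (0 + M), h * x ∈ Set.Icc 0 s := fun x hx ↦
      ⟨by nlinarith [hx.1], le_trans (by nlinarith [hx.2]) hMs⟩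
    exact hg (mem v hv) (mem w hw) (by nlinarith)
  calc ∑ j ∈ range M, g (h * j) = ∑ j ∈ range M, g (h * (0 + j)) := by simp
    _ ≤ ∫ v in (0)..(0 + M), g (h * v) := hmono.sum_le_integral
    _ = h⁻¹ * ∫ u in (0)..(h * M), g u := by
        simp [intervalIntegral.integral_comp_mul_left g hh.ne']
    _ ≤ h⁻¹ * ∫ u in (0)..s, g u := by
        gcongr
        refine intervalIntegral.integral_mono_interval le_rfl (by positivity) hMs ?_
          (by rw [← Set.uIcc_of_le hs] at hg; exact hg.intervalIntegrable)
        filter_upwards [MeasureTheory.ae_restrict_mem measurableSet_Ioc] with u hu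
        exact hg0 u (Set.Ioc_subset_Icc_self hu)

theorem integral_one_div_sq_sub_sq {a s : ℝ} (hs : 0 ≤ s) (hsa : s < a) :
    ∫ u in (0)..s, 1 / (a ^ 2 - u ^ 2) = log ((a + s) / (a - s)) / (2 * a) := by
  have ha : 0 < a := hs.trans_lt hsa
  have hmem : ∀ u ∈ Set.uIcc 0 s, 0 < a + u ∧ 0 < a - u := fun u hu ↦ by
    rw [Set.uIcc_of_le hs] at hu; constructor <;> linarith [hu.1, hu.2]
  have hderiv : ∀ u ∈ Set.uIcc 0 s,
      HasDerivAt (fun u ↦ (log (a + u) - log (a - u)) / (2 * a)) (1 / (a ^ 2 - u ^ 2)) u := by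
    intro u hu
    obtain ⟨h₁, h₂⟩ := hmem u hu
    refine ((((hasDerivAt_id u).const_add a).log h₁.ne').sub
      (((hasDerivAt_id u).const_sub a).log h₂.ne')).div_const (2 * a) |>.congr_deriv ?_
    rw [show a ^ 2 - u ^ 2 = (a + u) * (a - u) by ring, id]
    field_simp
    ring
  have hcont : ContinuousOn (fun u : ℝ ↦ 1 / (a ^ 2 - u ^ 2)) (Set.uIcc 0 s) :=
    continuousOn_const.div (by fun_prop) fun u hu ↦ by
      obtain ⟨h₁, h₂⟩ := hmem u hu; nlinarith
  rw [intervalIntegral.integral_eq_sub_of_hasDerivAt hderiv hcont.intervalIntegrable,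
    log_div (by linarith) (by linarith)]
  simp

theorem integral_one_div_sqrt_sq_sub_sq {A S : ℝ} (hS : 0 ≤ S) (hSA : S < A) :
    ∫ u in (0)..S, 1 / √(A ^ 2 - u ^ 2) = arcsin (S / A) := by
  have hA : 0 < A := hS.trans_lt hSA
  have hmem : ∀ u ∈ Set.uIcc 0 S, 0 < A ^ 2 - u ^ 2 ∧ -1 < u / A ∧ u / A < 1 := by
    intro u hu
    rw [Set.uIcc_of_le hS] at hu
    refine ⟨by nlinarith [hu.1, hu.2], ?_, ?_⟩
    · rw [lt_div_iff₀ hA]; linarith [hu.1]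
    · rw [div_lt_one hA]; linarith [hu.2]
  have hderiv : ∀ u ∈ Set.uIcc 0 S,
      HasDerivAt (fun u ↦ arcsin (u / A)) (1 / √(A ^ 2 - u ^ 2)) u := by
    intro u hu
    obtain ⟨hpos, h₁, h₂⟩ := hmem u hu
    refine (hasDerivAt_arcsin h₁.ne' h₂.ne).comp u ((hasDerivAt_id u).div_const A)
      |>.congr_deriv ?_
    have : A ^ 2 - u ^ 2 = A ^ 2 * (1 - (u / A) ^ 2) := by field_simp
    rw [this, sqrt_mul (by positivity), sqrt_sq hA.le]
    simp [div_eq_mul_inv, mul_comm]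
  have hcont : ContinuousOn (fun u : ℝ ↦ 1 / √(A ^ 2 - u ^ 2)) (Set.uIcc 0 S) :=
    continuousOn_const.div (by fun_prop) fun u hu ↦ (sqrt_pos.2 (hmem u hu).1).ne'
  rw [intervalIntegral.integral_eq_sub_of_hasDerivAt hderiv hcont.intervalIntegrable]
  simp

theorem sum_indicator_Iic_le_of_monotoneOn {f : ℝ → ℝ} {h m c : ℝ} (hh : 0 < h)
    (hf : MonotoneOn f (Set.Icc m c)) (hf0 : ∀ t ∈ Set.Icc m c, 0 ≤ f t) (T : Finset ℤ) :
    ∑ z ∈ T, (Set.Iic c).indicator f (m + h ^ 2 * z ^ 2) ≤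
      (Set.Iic c).indicator
        (fun m ↦ 2 * f c + 2 / h * ∫ u in (0)..√(c - m), f (m + u ^ 2)) m := by
  simp only [Set.indicator_apply, Set.mem_Iic]
  split_ifs with hmc
  swap
  · exact (sum_eq_zero fun z _ ↦ if_neg (by nlinarith)).le
  set s := √(c - m)
  have hs0 : 0 ≤ s := sqrt_nonneg _
  have hs2 : s ^ 2 = c - m := sq_sqrt (by linarith)
  have hcond : ∀ u : ℝ, 0 ≤ u → (m + u ^ 2 ≤ c ↔ u ≤ s) := fun u hu ↦ by
    rw [← sub_nonneg, show c - (m + u ^ 2) = s ^ 2 - u ^ 2 by rw [hs2]; ring, sub_nonneg]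
    exact pow_le_pow_iff_left₀ hu hs0 two_ne_zero
  set M := ⌊s / h⌋₊
  have hMs : h * M ≤ s := by
    rw [← le_div_iff₀' hh]; exact Nat.floor_le (by positivity)
  set g : ℝ → ℝ := fun u ↦ f (m + u ^ 2)
  have hg_mem : ∀ u ∈ Set.Icc 0 s, m + u ^ 2 ∈ Set.Icc m c := fun u hu ↦
    ⟨by nlinarith, (hcond u hu.1).2 hu.2⟩
  have hg : MonotoneOn g (Set.Icc 0 s) := fun u hu v hv huv ↦
    hf (hg_mem u hu) (hg_mem v hv) (by gcongr; exact hu.1)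
  set φ : ℤ → ℝ := fun z ↦ if m + h ^ 2 * z ^ 2 ≤ c then f (m + h ^ 2 * z ^ 2) else 0
  have hφ0 : ∀ z, 0 ≤ φ z := fun z ↦ by
    simp only [φ]; split_ifs with hz
    exacts [hf0 _ ⟨le_add_of_nonneg_right (by positivity), hz⟩, le_rfl]
  have hφ_neg : ∀ z, φ (-z) = φ z := fun z ↦ by simp [φ]
  have hφ_nat : ∀ j : ℕ, j ≤ M → φ j = g (h * j) := fun j hj ↦ by
    have hjs : h * j ≤ s := le_trans (by gcongr) hMs
    simp only [φ, g, Int.cast_natCast, ← mul_pow]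
    exact if_pos ((hcond _ (by positivity)).2 hjs)
  have hφM : ∀ z : ℤ, (M : ℤ) < z → φ z = 0 := fun z hz ↦ by
    have hz' : s < h * z := by
      rw [← div_lt_iff₀' hh]
      exact (Nat.lt_floor_add_one _).trans_le (by exact_mod_cast hz)
    simp only [φ, ← mul_pow]
    have hz0 : (0 : ℝ) ≤ z := by exact_mod_cast (show (0 : ℤ) ≤ z by omega)
    exact if_neg fun hc ↦ hz'.not_ge ((hcond _ (mul_nonneg hh.le hz0)).1 hc)
  calc ∑ z ∈ T, φ z ≤ 2 * ∑ j ∈ range (M + 1), φ j :=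
        sum_le_two_mul_sum_range_of_even M hφ0 hφ_neg hφM T
    _ = 2 * (∑ j ∈ range M, g (h * j) + g (h * M)) := by
        rw [sum_range_succ, hφ_nat M le_rfl,
          sum_congr rfl fun j hj ↦ hφ_nat j (mem_range.1 hj).le]
    _ ≤ 2 * (h⁻¹ * (∫ u in (0)..s, g u) + f c) := by
        have hM_mem := hg_mem _ ⟨by positivity, hMs⟩
        gcongr
        · exact sum_range_le_inv_mul_integral_of_monotoneOn hh hMs hg fun u hu ↦
            hf0 _ (hg_mem u hu)
        · exact hf hM_mem ⟨hmc, le_rfl⟩ hM_mem.2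
    _ = 2 * f c + 2 / h * ∫ u in (0)..s, g u := by ring

theorem sum_indicator_Iic_one_div_sub_le {K c h m : ℝ} (hh : 0 < h) (hcK : c < K)
    (hm : 0 ≤ m) (T : Finset ℤ) :
    ∑ z ∈ T, (Set.Iic c).indicator (fun t ↦ 1 / (K - t)) (m + h ^ 2 * z ^ 2) ≤
      (Set.Iic c).indicator
        (fun t ↦ 2 / (K - c) + log (4 * K / (K - c)) / h / √(K - t)) m := by
  refine (sum_indicator_Iic_le_of_monotoneOn hh (fun t _ u hu htu ↦ ?_) (fun t ht ↦ ?_) T).trans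
    (Set.indicator_le_indicator' fun hmc ↦ ?_)
  · exact one_div_le_one_div_of_le (by linarith [hu.2]) (by linarith)
  · exact (one_div_pos.2 (by linarith [ht.2])).le
  set a := √(K - m)
  set s := √(c - m)
  have ha2 : a ^ 2 = K - m := sq_sqrt (by linarith [Set.mem_Iic.1 hmc])
  have hs2 : s ^ 2 = c - m := sq_sqrt (by linarith [Set.mem_Iic.1 hmc])
  have hsa : s < a := sqrt_lt_sqrt (by linarith [Set.mem_Iic.1 hmc]) (by linarith)
  have hs : 0 ≤ s := sqrt_nonneg _
  have ha : 0 < a := hs.trans_lt hsa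
  have hint : ∫ u in (0)..s, 1 / (K - (m + u ^ 2)) = log ((a + s) / (a - s)) / (2 * a) := by
    rw [← integral_one_div_sq_sub_sq hs hsa]
    congr 1 with u
    rw [ha2]; ring_nf
  have hratio : (a + s) / (a - s) ≤ 4 * K / (K - c) := by
    have hprod : (a - s) * (a + s) = K - c := by linear_combination ha2 - hs2
    rw [div_le_div_iff₀ (by linarith) (by linarith), ← hprod]
    have : (a + s) ^ 2 ≤ 4 * K := by nlinarith
    nlinarith
  calc 2 * (1 / (K - c)) + 2 / h * ∫ u in (0)..s, 1 / (K - (m + u ^ 2))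
      = 2 / (K - c) + log ((a + s) / (a - s)) / h / a := by rw [hint]; field_simp
    _ ≤ 2 / (K - c) + log (4 * K / (K - c)) / h / a := by gcongr

theorem sum_indicator_Iic_add_div_sqrt_le {K c h m α β : ℝ} (hh : 0 < h) (hcK : c < K)
    (hm : 0 ≤ m) (hα : 0 ≤ α) (hβ : 0 ≤ β) (T : Finset ℤ) :
    ∑ z ∈ T, (Set.Iic c).indicator (fun t ↦ α + β / √(K - t)) (m + h ^ 2 * z ^ 2) ≤
      (Set.Iic c).indicator
        (fun _ ↦ 2 * (α + β / √(K - c)) + 2 / h * (α * √c + β * (π / 2))) m := by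
  refine (sum_indicator_Iic_le_of_monotoneOn hh (fun t _ u hu htu ↦ ?_)
    (fun _ _ ↦ by positivity) T).trans (Set.indicator_le_indicator' fun hmc ↦ ?_)
  · gcongr α + β / √?_
    · exact sqrt_pos.2 (by linarith [hu.2])
    · linarith
  have hmc : m ≤ c := hmc
  set A := √(K - m)
  set S := √(c - m)
  have hA2 : A ^ 2 = K - m := sq_sqrt (by linarith)
  have hSA : S < A := sqrt_lt_sqrt (by linarith) (by linarith)
  have hS : 0 ≤ S := sqrt_nonneg _
  have hcont : ContinuousOn (fun u : ℝ ↦ 1 / √(A ^ 2 - u ^ 2)) (Set.uIcc 0 S) := by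
    refine continuousOn_const.div (by fun_prop) fun u hu ↦ (sqrt_pos.2 ?_).ne'
    rw [Set.uIcc_of_le hS] at hu
    nlinarith [hu.1, hu.2]
  have hint : ∫ u in (0)..S, (α + β / √(K - (m + u ^ 2))) = α * S + β * arcsin (S / A) := by
    have hK : ∀ u : ℝ, K - (m + u ^ 2) = A ^ 2 - u ^ 2 := fun u ↦ by rw [hA2]; ring
    simp_rw [hK, div_eq_mul_one_div β]
    rw [intervalIntegral.integral_add intervalIntegrable_const
      (hcont.intervalIntegrable.const_mul β), intervalIntegral.integral_const,
      intervalIntegral.integral_const_mul, integral_one_div_sqrt_sq_sub_sq hS hSA]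
    simp [mul_comm]
  rw [hint]
  gcongr
  · exact sqrt_le_sqrt (by linarith)
  · exact arcsin_le_pi_div_two _

theorem sum_sum_sum_indicator_Iic_one_div_sub_le {K c h : ℝ} (hh : 0 < h) (hc : 0 ≤ c)
    (hcK : c < K) (T : Finset ℤ) :
    h ^ 3 * ∑ x ∈ T, ∑ y ∈ T, ∑ z ∈ T, (Set.Iic c).indicator (fun t ↦ 1 / (K - t))
        (h ^ 2 * x ^ 2 + h ^ 2 * y ^ 2 + h ^ 2 * z ^ 2)
      ≤ 2 * (h + √c) * (4 * h ^ 2 / (K - c) + 2 * h * log (4 * K / (K - c)) / √(K - c)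
          + 4 * h * √c / (K - c) + π * log (4 * K / (K - c))) := by
  have hg : 0 < K - c := by linarith
  set ℓ := log (4 * K / (K - c))
  have hℓ : 0 ≤ ℓ := log_nonneg (by rw [le_div_iff₀ hg]; linarith)
  set C :=
    2 * (2 / (K - c) + ℓ / h / √(K - c)) + 2 / h * (2 / (K - c) * √c + ℓ / h * (π / 2))
  have hC : 0 ≤ C := by positivity
  have hsum : ∑ x ∈ T, ∑ y ∈ T, ∑ z ∈ T, (Set.Iic c).indicator (fun t ↦ 1 / (K - t))
        (h ^ 2 * x ^ 2 + h ^ 2 * y ^ 2 + h ^ 2 * z ^ 2)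
      ≤ 2 * C + 2 / h * (√c * C) := calc
    _ ≤ ∑ x ∈ T, ∑ y ∈ T,
          (Set.Iic c).indicator (fun t ↦ 2 / (K - c) + ℓ / h / √(K - t))
            (h ^ 2 * x ^ 2 + h ^ 2 * y ^ 2) := by
        gcongr with x _ y _
        exact sum_indicator_Iic_one_div_sub_le hh hcK (by positivity) T
    _ ≤ ∑ x ∈ T, (Set.Iic c).indicator (fun _ ↦ C) (0 + h ^ 2 * x ^ 2) := by
        gcongr with x _
        rw [zero_add]
        exact sum_indicator_Iic_add_div_sqrt_le hh hcK (by positivity) (by positivity)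
          (by positivity) T
    _ ≤ (Set.Iic c).indicator (fun m ↦ 2 * C + 2 / h * ∫ _ in (0)..√(c - m), C) 0 :=
        sum_indicator_Iic_le_of_monotoneOn hh monotoneOn_const (fun _ _ ↦ hC) T
    _ = 2 * C + 2 / h * (√c * C) := by simp [hc]
  calc h ^ 3 * _ ≤ h ^ 3 * (2 * C + 2 / h * (√c * C)) := by gcongr
    _ = _ := by
      simp only [C]
      field_simp
      ring

def finThreeArrowEquiv (α : Type*) : (Fin 3 → α) ≃ α × α × α where
  toFun n := (n 0, n 1, n 2)
  invFun p := ![p.1, p.2.1, p.2.2]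
  left_inv n := by ext i; fin_cases i <;> rfl
  right_inv p := rfl

theorem tsum_fin_three_eq_sum_Icc {F : (Fin 3 → ℤ) → ℝ} (N : ℕ)
    (hF : ∀ n, F n ≠ 0 → ∀ i, |n i| ≤ N) :
    ∑' n, F n =
      ∑ x ∈ Icc (-N : ℤ) N, ∑ y ∈ Icc (-N : ℤ) N, ∑ z ∈ Icc (-N : ℤ) N,
        F ![x, y, z] := by
  set I := Icc (-N : ℤ) N
  rw [← (finThreeArrowEquiv ℤ).symm.tsum_eq, tsum_eq_sum (s := I ×ˢ I ×ˢ I)]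
  · simp only [sum_product]; rfl
  · rintro ⟨x, y, z⟩ hp
    by_contra hne
    have h := hF ![x, y, z] hne
    have hx : |x| ≤ N := by simpa using h 0
    have hy : |y| ≤ N := by simpa using h 1
    have hz : |z| ≤ N := by simpa using h 2
    simp only [I, mem_product, mem_Icc] at hp
    rw [abs_le] at hx hy hz
    omega

theorem momVec_apply (L : ℝ) (n : Fin 3 → ℤ) (i : Fin 3) :
    momVec L n i = 2 * π / L * n i := by
  simp [momVec, Pi.single_apply]

theorem knorm_sq (L : ℝ) (n : Fin 3 → ℤ) :
    knorm L n ^ 2 =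
      (2 * π / L) ^ 2 * n 0 ^ 2 + (2 * π / L) ^ 2 * n 1 ^ 2 + (2 * π / L) ^ 2 * n 2 ^ 2 := by
  rw [knorm, EuclideanSpace.norm_eq, sq_sqrt (by positivity), Fin.sum_univ_three]
  simp only [momVec_apply, Real.norm_eq_abs, sq_abs]
  ring

theorem tsum_ite_knorm_eq_sum_Icc {K R L : ℝ} (N : ℕ) (hR : 0 ≤ R)
    (hN : R < 2 * π / L * (N + 1)) :
    ∑' n, (if knorm L n ≤ R then 1 / (K - knorm L n ^ 2) else 0) =
      ∑ x ∈ Icc (-N : ℤ) N, ∑ y ∈ Icc (-N : ℤ) N, ∑ z ∈ Icc (-N : ℤ) N,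
        (Set.Iic (R ^ 2)).indicator (fun t ↦ 1 / (K - t))
          ((2 * π / L) ^ 2 * x ^ 2 + (2 * π / L) ^ 2 * y ^ 2 + (2 * π / L) ^ 2 * z ^ 2) := by
  set h := 2 * π / L
  have hh : 0 < h := by
    by_contra! hh; nlinarith [show (0 : ℝ) ≤ N + 1 by positivity]
  have hsupp : ∀ n, (if knorm L n ≤ R then 1 / (K - knorm L n ^ 2) else 0) ≠ 0 →
      ∀ i, |n i| ≤ N := by
    intro n hn i
    have hkR : knorm L n ≤ R := by by_contra hkR; exact hn (if_neg hkR)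
    have hi : h * |(n i : ℝ)| < h * (N + 1) := calc
      h * |(n i : ℝ)| = ‖momVec L n i‖ := by
        rw [momVec_apply, norm_mul, norm_of_nonneg hh.le]; rfl
      _ ≤ knorm L n := PiLp.norm_apply_le _ i
      _ < h * (N + 1) := hkR.trans_lt hN
    have : ((|n i| : ℤ) : ℝ) < (N : ℤ) + 1 := by
      push_cast; exact lt_of_mul_lt_mul_left hi hh.le
    exact Int.lt_add_one_iff.1 (by exact_mod_cast this)
  have hind : ∀ n, (if knorm L n ≤ R then 1 / (K - knorm L n ^ 2) else 0) =
      (Set.Iic (R ^ 2)).indicator (fun t ↦ 1 / (K - t)) (knorm L n ^ 2) := fun n ↦ by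
    have hk : 0 ≤ knorm L n := norm_nonneg _
    by_cases hn : knorm L n ≤ R
    · rw [if_pos hn, Set.indicator_of_mem (Set.mem_Iic.2 (pow_le_pow_left₀ hk hn 2))]
    · rw [if_neg hn, Set.indicator_of_notMem fun hmem ↦
        hn ((sq_le_sq₀ hk hR).1 (Set.mem_Iic.1 hmem))]
  rw [tsum_fin_three_eq_sum_Icc N hsupp]
  simp only [hind]
  simp [knorm_sq, h]

theorem sub_rpow_three_halves_nonneg_and_pow_three_le {x : ℝ} (hx0 : 0 < x) (hx1 : x ≤ 1) :
    0 ≤ x - x ^ ((3 : ℝ) / 2) ∧ x ^ 3 ≤ x ^ 2 - (x - x ^ ((3 : ℝ) / 2)) ^ 2 := by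
  have hle : x ^ ((3 : ℝ) / 2) ≤ x := by
    simpa using rpow_le_rpow_of_exponent_ge hx0 hx1 (by norm_num : (1 : ℝ) ≤ 3 / 2)
  have hge : x ^ 2 ≤ x ^ ((3 : ℝ) / 2) := by
    simpa using rpow_le_rpow_of_exponent_ge hx0 hx1 (by norm_num : (3 : ℝ) / 2 ≤ 2)
  constructor <;> nlinarith

theorem resolvent_terms_le {kF R h : ℝ} (hk0 : 0 < kF) (hk1 : kF ≤ 1) (hR : 0 ≤ R)
    (hg : kF ^ 3 ≤ kF ^ 2 - R ^ 2) (hh : 0 < h) (hhk : h ≤ kF ^ 3) :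
    2 * (h + R) * (4 * h ^ 2 / (kF ^ 2 - R ^ 2)
        + 2 * h * log (4 * kF ^ 2 / (kF ^ 2 - R ^ 2)) / √(kF ^ 2 - R ^ 2)
        + 4 * h * R / (kF ^ 2 - R ^ 2) + π * log (4 * kF ^ 2 / (kF ^ 2 - R ^ 2)))
      ≤ (2 * π) ^ 3 * (kF * (1 + log (4 / kF))) := by
  set g := kF ^ 2 - R ^ 2
  set ℓ := log (4 * kF ^ 2 / g)
  have hk3 : kF ^ 3 ≤ kF := by nlinarith [pow_le_one₀ hk0.le hk1 (n := 2)]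
  have hg0 : 0 < g := lt_of_lt_of_le (by positivity) hg
  have hg1 : g ≤ 1 := by nlinarith
  have hRk : R ≤ kF := by nlinarith
  have hhg : h ≤ g := hhk.trans hg
  have hℓ0 : 0 ≤ ℓ := log_nonneg (by rw [le_div_iff₀ hg0]; nlinarith)
  have hℓ : ℓ ≤ log (4 / kF) := by
    refine log_le_log (by positivity) ?_
    rw [div_le_div_iff₀ hg0 hk0]; nlinarith
  have hsqrt : g ≤ √g := by
    rw [le_sqrt hg0.le hg0.le]; nlinarith
  -- `h ≤ k_F³ ≤ g ≤ √g ≤ 1` makes every term but `π ℓ` bounded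
  have h1 : 4 * h ^ 2 / g ≤ 4 := by
    rw [div_le_iff₀ hg0]; nlinarith
  have h2 : 2 * h * ℓ / √g ≤ 2 * ℓ := by
    rw [div_le_iff₀ (hg0.trans_le hsqrt)]; nlinarith
  have h3 : 4 * h * R / g ≤ 4 := by
    rw [div_le_iff₀ hg0]; nlinarith
  have hπ : (6 : ℝ) ≤ 2 * π := by linarith [pi_gt_three]
  calc 2 * (h + R) * (4 * h ^ 2 / g + 2 * h * ℓ / √g + 4 * h * R / g + π * ℓ)
      ≤ 2 * (2 * kF) * (8 + 6 * ℓ) := by gcongr ?_ * ?_ <;> nlinarith [pi_le_four]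
    _ ≤ 6 ^ 3 * (kF * (1 + ℓ)) := by nlinarith
    _ ≤ (2 * π) ^ 3 * (kF * (1 + log (4 / kF))) := by gcongr

theorem mul_one_add_log_four_div_le {x : ℝ} (hx0 : 0 < x) (hx1 : x ≤ 1) :
    x * (1 + log (4 / x)) ≤ 8 * x ^ ((7 : ℝ) / 8) := by
  set y := x ^ ((1 : ℝ) / 8)
  have hy0 : 0 < y := by positivity
  have hy1 : y ≤ 1 := rpow_le_one hx0.le hx1 (by norm_num)
  have hxy : x = y ^ 8 := by
    rw [← rpow_natCast, ← rpow_mul hx0.le]; norm_num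
  have hxy7 : x ^ ((7 : ℝ) / 8) = y ^ 7 := by
    rw [← rpow_natCast, ← rpow_mul hx0.le]; norm_num
  have hlog : log (4 / x) = log 4 - 8 * log y := by
    rw [log_div (by norm_num) hx0.ne', hxy, log_pow]; push_cast; ring
  have hlog4 : 1 + log 4 ≤ 8 := by linarith [log_le_sub_one_of_pos (by norm_num : (0 : ℝ) < 4)]
  have hlogy : -log y * y ≤ 1 - y := by
    have := log_le_sub_one_of_pos (inv_pos.2 hy0)
    rw [log_inv] at this
    have := mul_le_mul_of_nonneg_right this hy0.le
    rwa [sub_mul, inv_mul_cancel₀ hy0.ne', one_mul] at this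
  rw [hxy7, hlog, hxy]
  nlinarith [pow_pos hy0 7, pow_pos hy0 8]

theorem lattice_resolvent_sum_le_mul_log {kF L : ℝ} (hk0 : 0 < kF) (hk1 : kF ≤ 1)
    (hL : 2 * π / kF ^ 3 ≤ L) :
    (1 / L ^ 3) * ∑' n : Fin 3 → ℤ,
        (if knorm L n ≤ kF - kF ^ ((3 : ℝ) / 2) then 1 / (kF ^ 2 - knorm L n ^ 2) else 0)
      ≤ kF * (1 + log (4 / kF)) := by
  obtain ⟨hR, hg⟩ := sub_rpow_three_halves_nonneg_and_pow_three_le hk0 hk1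
  set R := kF - kF ^ ((3 : ℝ) / 2)
  have hL0 : 0 < L := lt_of_lt_of_le (by positivity) hL
  set h := 2 * π / L
  have hh : 0 < h := by positivity
  have hhk : h ≤ kF ^ 3 := by
    rw [div_le_iff₀ (by positivity)] at hL
    rw [div_le_iff₀ hL0]; linarith
  set N := ⌊R / h⌋₊
  rw [tsum_ite_knorm_eq_sum_Icc N hR (by rw [← div_lt_iff₀' hh]; exact Nat.lt_floor_add_one _)]
  have hsum := sum_sum_sum_indicator_Iic_one_div_sub_le hh (sq_nonneg R)
    (show R ^ 2 < kF ^ 2 by nlinarith) (Icc (-N : ℤ) N)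
  rw [sqrt_sq hR] at hsum
  have hL3 : 1 / L ^ 3 = h ^ 3 / (2 * π) ^ 3 := by simp only [h]; field_simp
  rw [hL3, div_mul_eq_mul_div, div_le_iff₀ (by positivity), mul_comm _ ((2 * π) ^ 3)]
  exact hsum.trans (resolvent_terms_le hk0 hk1 hR hg hh hhk)

theorem refined_interior_lattice_resolvent_sum_bound :
    ∀ δ : ℝ, δ ∈ Set.Ioc (0 : ℝ) (1 / 8) →
      ∃ C : ℝ, 0 < C ∧
        ∀ kF : ℝ, kF ∈ Set.Ioc (0 : ℝ) 1 →
          ∃ L₀ : ℝ, 0 < L₀ ∧ ∀ L : ℝ, L₀ ≤ L →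
            (1 / L ^ 3) *
                ∑' n : Fin 3 → ℤ,
                  (if knorm L n ≤ kF - kF ^ ((3 : ℝ) / 2) then
                    1 / (kF ^ 2 - knorm L n ^ 2)
                  else 0)
              ≤ C * kF ^ ((1 : ℝ) / 2 + 3 * δ) := by
  rintro δ ⟨-, hδ⟩
  refine ⟨8, by norm_num, fun kF ⟨hk0, hk1⟩ ↦
    ⟨2 * π / kF ^ 3, by positivity, fun L hL ↦ ?_⟩⟩
  calc _ ≤ kF * (1 + log (4 / kF)) := lattice_resolvent_sum_le_mul_log hk0 hk1 hL
    _ ≤ 8 * kF ^ ((7 : ℝ) / 8) := mul_one_add_log_four_div_le hk0 hk1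
    _ ≤ 8 * kF ^ ((1 : ℝ) / 2 + 3 * δ) :=
      mul_le_mul_of_nonneg_left (rpow_le_rpow_of_exponent_ge hk0 hk1 (by linarith)) (by norm_num)
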